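/- Let f : ℝ → ℂ be a function in L²(ℝ) such that f(x) = ∫_ℝ k(x,y) f(y) dy for every x ∈ ℝ. Write f_− = f·𝟙_{(−∞,0]}, f_+ = f·𝟙_{(0,∞)}, and f̌_−(x) = f_−(−x). Then for every x ≤ 0, f(x) = Π_{c_−}[ f_− − (ρ_+−ρ_−)· f̌_−·𝟙_{(0,∞)} + 2ρ_+·√(c_+/c_−)·(δ_{c_−/c_+} f_+)·𝟙_{(0,∞)} ](x). -/

import Mathlib

/-!
For `x ≤ 0` every piece of the kernel row `k(x, ·)` is a reflection or a dilation of
`sinc (c₋ (x - ·))`: the term `sinc (c₋ (x + y))` on `y ≤ 0` becomes `sinc (c₋ (x - y))`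
under `y ↦ -y`, and `sinc (c₋ x - c₊ y)` on `y > 0` becomes `sinc (c₋ (x - y))` under
`y ↦ (c₋/c₊) y`. Performing these substitutions in the reproducing identity
`f x = ∫ k(x, y) f y dy` turns it into a single integral against `sinc (c₋ (x - ·))`, i.e. a
value of `Π_{c₋}`. Every integral involved converges absolutely, because `sinc` and `f` are
square integrable.
-/

/-- `sinc t = sin t / t` for `t ≠ 0`, `sinc 0 = 1`. -/
noncomputable def sinc (t : ℝ) : ℝ := if t = 0 then 1 else Real.sin t / t

/-- The reproducing kernel of the variable-bandwidth Paley–Wiener space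
`PW_{[0,Ω]}(A_p)` in the toy model, where `p = p₋` on `(-∞, 0]` and `p = p₊` on
`(0, ∞)`, with `c_± = √(Ω/p_±)` and `ρ_± = √(p_±)/(√(p₋) + √(p₊))`. -/
noncomputable def toyKernel (pm pp Ω : ℝ) (x y : ℝ) : ℝ :=
  let cm := Real.sqrt (Ω / pm)
  let cp := Real.sqrt (Ω / pp)
  let rm := Real.sqrt pm / (Real.sqrt pm + Real.sqrt pp)
  let rp := Real.sqrt pp / (Real.sqrt pm + Real.sqrt pp)
  if x ≤ 0 then
    if y ≤ 0 then (cm / Real.pi) * (sinc (cm * (x - y)) - (rp - rm) * sinc (cm * (x + y)))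
    else (2 * cp * rp / Real.pi) * sinc (cm * x - cp * y)
  else
    if y ≤ 0 then (2 * cm * rm / Real.pi) * sinc (cp * x - cm * y)
    else (cp / Real.pi) * (sinc (cp * (x - y)) + (rp - rm) * sinc (cp * (x + y)))

/-- The orthogonal projection of `L²(ℝ)` onto the Paley–Wiener space `PW_c(ℝ)`,
evaluated pointwise: `Π_c φ(x) = (c/π) ∫ sinc(c(x - y)) φ(y) dy`. -/
noncomputable def PiProj (c : ℝ) (φ : ℝ → ℂ) (x : ℝ) : ℂ :=
  ((c / Real.pi : ℝ) : ℂ) * ∫ y : ℝ, ((sinc (c * (x - y)) : ℝ) : ℂ) * φ y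

/-- The `L²`-normalized dilation `δ_a φ(x) = √a · φ(a x)`. -/
noncomputable def dil (a : ℝ) (φ : ℝ → ℂ) (x : ℝ) : ℂ :=
  ((Real.sqrt a : ℝ) : ℂ) * φ (a * x)

open MeasureTheory Set

lemma sinc_sq_le_two_mul_inv_one_add_sq (t : ℝ) : sinc t ^ 2 ≤ 2 * (1 + t ^ 2)⁻¹ := by
  have h_sinc : sinc t ^ 2 ≤ 1 := (sq_le_one_iff_abs_le_one _).2 (Real.abs_sinc_le_one t)
  have h_sin : (t * sinc t) ^ 2 ≤ 1 := by
    rcases eq_or_ne t 0 with rfl | ht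
    · simp
    · rw [show t * sinc t = Real.sin t by rw [sinc, if_neg ht]; field_simp]
      exact Real.sin_sq_le_one t
  rw [← div_eq_mul_inv, le_div_iff₀ (by positivity)]
  nlinarith

lemma integrable_sinc_sq : Integrable fun t => sinc t ^ 2 := by
  refine (integrable_inv_one_add_sq.const_mul 2).mono'
    (Real.continuous_sinc.pow 2).aestronglyMeasurable (Filter.Eventually.of_forall fun t => ?_)
  rw [Real.norm_eq_abs, abs_of_nonneg (sq_nonneg _)]
  exact sinc_sq_le_two_mul_inv_one_add_sq t

lemma memLp_two_sinc_sub_mul {a : ℝ} (ha : a ≠ 0) (b : ℝ) :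
    MemLp (fun y => sinc (b - a * y)) 2 volume := by
  have h_cont : Continuous fun y => sinc (b - a * y) := Real.continuous_sinc.comp (by fun_prop)
  rw [memLp_two_iff_integrable_sq h_cont.aestronglyMeasurable]
  exact (integrable_comp_mul_left_iff (fun y => sinc (b - y) ^ 2) ha).2
    (integrable_sinc_sq.comp_sub_left b)

lemma integrable_sinc_sub_mul_mul {a : ℝ} (ha : a ≠ 0) (b : ℝ) {f : ℝ → ℂ}
    (hf : MemLp f 2 volume) : Integrable fun y => ((sinc (b - a * y) : ℝ) : ℂ) * f y :=
  (memLp_two_sinc_sub_mul ha b).ofReal.integrable_mul hf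

section ChangeOfVariables

variable {g φ : ℝ → ℂ}

lemma mul_indicator_reflect_eq (y : ℝ) :
    g y * (Ioi 0).indicator (fun t => (Iic 0).indicator φ (-t)) y
      = (Iio 0).indicator (fun t => g (-t) * φ t) (-y) := by
  by_cases hy : 0 < y
  · simp [hy, hy.le]
  · simp [hy]

lemma mul_indicator_dil_eq {a : ℝ} (ha : 0 < a) (y : ℝ) :
    g y * (Ioi 0).indicator (dil a ((Ioi 0).indicator φ)) y
      = (Ioi 0).indicator (fun u => ((√a : ℝ) : ℂ) * (g (u / a) * φ u)) (a * y) := by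
  by_cases hy : 0 < y
  · simp only [dil, indicator_of_mem (mem_Ioi.2 hy), indicator_of_mem (mem_Ioi.2 (mul_pos ha hy)),
      mul_div_cancel_left₀ y ha.ne']
    ring
  · simp [hy, mul_pos_iff_of_pos_left ha]

lemma integral_mul_indicator_reflect :
    ∫ y, g y * (Ioi 0).indicator (fun t => (Iic 0).indicator φ (-t)) y
      = ∫ y in Iic 0, g (-y) * φ y := by
  simp_rw [mul_indicator_reflect_eq]
  rw [integral_neg_eq_self, integral_indicator measurableSet_Iio, integral_Iic_eq_integral_Iio]

lemma integrable_mul_indicator_reflect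
    (h : IntegrableOn (fun y => g (-y) * φ y) (Iic 0)) :
    Integrable fun y => g y * (Ioi 0).indicator (fun t => (Iic 0).indicator φ (-t)) y := by
  simp_rw [mul_indicator_reflect_eq]
  exact ((h.mono_set Iio_subset_Iic_self).integrable_indicator measurableSet_Iio).comp_neg

lemma integral_mul_indicator_dil {a : ℝ} (ha : 0 < a) :
    ∫ y, g y * (Ioi 0).indicator (dil a ((Ioi 0).indicator φ)) y
      = ((√a / a : ℝ) : ℂ) * ∫ y in Ioi 0, g (y / a) * φ y := by
  simp_rw [mul_indicator_dil_eq ha]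
  rw [Measure.integral_comp_mul_left, integral_indicator measurableSet_Ioi, integral_const_mul,
    abs_of_pos (inv_pos.2 ha), Complex.real_smul, ← mul_assoc, ← Complex.ofReal_mul,
    inv_mul_eq_div]

lemma integrable_mul_indicator_dil {a : ℝ} (ha : 0 < a)
    (h : IntegrableOn (fun y => g (y / a) * φ y) (Ioi 0)) :
    Integrable fun y => g y * (Ioi 0).indicator (dil a ((Ioi 0).indicator φ)) y := by
  simp_rw [mul_indicator_dil_eq ha]
  exact (integrable_comp_mul_left_iff _ ha.ne').2
    (IntegrableOn.integrable_indicator (Integrable.const_mul h _) measurableSet_Ioi)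

lemma integral_mul_reflect_dil_combination {a : ℝ} (ha : 0 < a) (α β : ℂ)
    (h_id : IntegrableOn (fun y => g y * φ y) (Iic 0))
    (h_reflect : IntegrableOn (fun y => g (-y) * φ y) (Iic 0))
    (h_dil : IntegrableOn (fun y => g (y / a) * φ y) (Ioi 0)) :
    ∫ y, g y * ((Iic 0).indicator φ y
        - α * (Ioi 0).indicator (fun t => (Iic 0).indicator φ (-t)) y
        + β * (Ioi 0).indicator (dil a ((Ioi 0).indicator φ)) y)
      = (∫ y in Iic 0, g y * φ y) - α * (∫ y in Iic 0, g (-y) * φ y)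
        + β * ((√a / a : ℝ) : ℂ) * ∫ y in Ioi 0, g (y / a) * φ y := by
  have h_id' : Integrable fun y => g y * (Iic 0).indicator φ y := by
    simpa only [← indicator_mul_right] using h_id.integrable_indicator measurableSet_Iic
  have h_reflect' := (integrable_mul_indicator_reflect h_reflect).const_mul α
  simp_rw [mul_add, mul_sub, mul_left_comm (g _) α, mul_left_comm (g _) β]
  rw [integral_add ?_ ((integrable_mul_indicator_dil ha h_dil).const_mul β),
    integral_sub h_id' h_reflect', integral_const_mul, integral_const_mul,
    integral_mul_indicator_reflect, integral_mul_indicator_dil ha, mul_assoc β]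
  · simp only [← indicator_mul_right, integral_indicator measurableSet_Iic]
  · exact h_id'.sub h_reflect'

end ChangeOfVariables

lemma integral_ite_nonpos_ofReal_mul {u v w : ℝ → ℝ} {f : ℝ → ℂ} (A B C : ℝ)
    (hu : IntegrableOn (fun y => (u y : ℂ) * f y) (Iic 0))
    (hv : IntegrableOn (fun y => (v y : ℂ) * f y) (Iic 0))
    (hw : IntegrableOn (fun y => (w y : ℂ) * f y) (Ioi 0)) :
    ∫ y, ((if y ≤ 0 then A * (u y - B * v y) else C * w y : ℝ) : ℂ) * f y
      = A * ((∫ y in Iic 0, (u y : ℂ) * f y) - B * ∫ y in Iic 0, (v y : ℂ) * f y)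
        + C * ∫ y in Ioi 0, (w y : ℂ) * f y := by
  have h_split : (fun y => ((if y ≤ 0 then A * (u y - B * v y) else C * w y : ℝ) : ℂ) * f y)
      = (Iic 0).piecewise (fun y => A * ((u y : ℂ) * f y - B * ((v y : ℂ) * f y)))
          (fun y => C * ((w y : ℂ) * f y)) := by
    ext y
    by_cases hy : y ≤ 0 <;> simp only [piecewise, mem_Iic, hy, if_true, if_false] <;>
      push_cast <;> ring
  rw [h_split, integral_piecewise measurableSet_Iic ?_ (by rw [compl_Iic]; exact hw.const_mul _),
    compl_Iic, integral_const_mul, integral_const_mul, integral_sub hu (hv.const_mul _),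
    integral_const_mul]
  exact (hu.sub (hv.const_mul _)).const_mul _

lemma integral_nonpos_row_mul_eq_piProj {c c' : ℝ} (hc : 0 < c) (hc' : 0 < c') (r r' x : ℝ)
    {f : ℝ → ℂ} (hf : MemLp f 2 volume) :
    ∫ y, ((if y ≤ 0 then c / Real.pi * (sinc (c * (x - y)) - (r' - r) * sinc (c * (x + y)))
        else 2 * c' * r' / Real.pi * sinc (c * x - c' * y) : ℝ) : ℂ) * f y
      = PiProj c (fun y => (Iic 0).indicator f y
          - ((r' - r : ℝ) : ℂ) * (Ioi 0).indicator (fun t => (Iic 0).indicator f (-t)) y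
          + ((2 * r' * √(c' / c) : ℝ) : ℂ) *
              (Ioi 0).indicator (dil (c / c') ((Ioi 0).indicator f)) y)
        x := by
  have h_diff : Integrable fun y => ((sinc (c * (x - y)) : ℝ) : ℂ) * f y := by
    simpa only [mul_sub] using integrable_sinc_sub_mul_mul hc.ne' (c * x) hf
  have h_sum : Integrable fun y => ((sinc (c * (x + y)) : ℝ) : ℂ) * f y := by
    simpa only [mul_add, neg_mul, sub_neg_eq_add] using
      integrable_sinc_sub_mul_mul (neg_ne_zero.2 hc.ne') (c * x) hf
  have h_dil := integrable_sinc_sub_mul_mul hc'.ne' (c * x) hf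
  have h_reflect (y : ℝ) : c * (x - -y) = c * (x + y) := by ring
  have h_dilate (y : ℝ) : c * (x - y / (c / c')) = c * x - c' * y := by field_simp
  rw [integral_ite_nonpos_ofReal_mul _ _ _ h_diff.integrableOn h_sum.integrableOn
      h_dil.integrableOn, PiProj,
    integral_mul_reflect_dil_combination (div_pos hc hc') _ _ ?_ ?_ ?_]
  · have h_sqrt : √(c' / c) * √(c / c') = 1 := by
      rw [← Real.sqrt_mul (by positivity), show c' / c * (c / c') = 1 by field_simp,
        Real.sqrt_one]
    have h_dil_coeff : c / Real.pi * (2 * r' * √(c' / c) * (√(c / c') / (c / c')))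
        = 2 * c' * r' / Real.pi := by
      field_simp
      linear_combination r' * h_sqrt
    have h_dil_coeff' := congrArg (fun t : ℝ => (t : ℂ)) h_dil_coeff
    simp only [h_reflect, h_dilate]
    push_cast at h_dil_coeff' ⊢
    linear_combination -(∫ y in Ioi 0, ((sinc (c * x - c' * y) : ℝ) : ℂ) * f y) * h_dil_coeff'
  · exact h_diff.integrableOn
  · simpa only [h_reflect] using h_sum.integrableOn
  · simpa only [h_dilate] using h_dil.integrableOn

/-- If `f ∈ L²(ℝ)` satisfies the reproducing identity of the toy model, then for `x ≤ 0`,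
`f(x) = Π_{c₋}[f₋ - (ρ₊ - ρ₋)·f̌₋·𝟙_{(0,∞)} + 2ρ₊·√(c₊/c₋)·(δ_{c₋/c₊} f₊)·𝟙_{(0,∞)}](x)`,
where `f₋ = f·𝟙_{(-∞,0]}`, `f₊ = f·𝟙_{(0,∞)}` and `f̌₋(x) = f₋(-x)`. -/
theorem toy_negative_part_formula (pm pp Ω : ℝ) (hpm : 0 < pm) (hpp : 0 < pp)
    (hΩ : 0 < Ω) (f : ℝ → ℂ)
    (hf2 : MeasureTheory.MemLp f 2 MeasureTheory.volume)
    (hf : ∀ x : ℝ, f x = ∫ y : ℝ, ((toyKernel pm pp Ω x y : ℝ) : ℂ) * f y) :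
    ∀ x : ℝ, x ≤ 0 →
      f x = PiProj (Real.sqrt (Ω / pm))
        (fun y => (Set.Iic (0 : ℝ)).indicator f y
          - (((Real.sqrt pp - Real.sqrt pm) / (Real.sqrt pm + Real.sqrt pp) : ℝ) : ℂ) *
              (Set.Ioi (0 : ℝ)).indicator (fun t => (Set.Iic (0 : ℝ)).indicator f (-t)) y
          + ((2 * (Real.sqrt pp / (Real.sqrt pm + Real.sqrt pp)) *
              Real.sqrt (Real.sqrt (Ω / pp) / Real.sqrt (Ω / pm)) : ℝ) : ℂ) *
              (Set.Ioi (0 : ℝ)).indicator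
                (dil (Real.sqrt (Ω / pm) / Real.sqrt (Ω / pp))
                  ((Set.Ioi (0 : ℝ)).indicator f)) y) x := by
  intro x hx
  rw [hf x, sub_div]
  simp only [toyKernel, if_pos hx]
  exact integral_nonpos_row_mul_eq_piProj (Real.sqrt_pos.2 (div_pos hΩ hpm))
    (Real.sqrt_pos.2 (div_pos hΩ hpp)) _ _ x hf2
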